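/- Let z be a standard bivariate normal vector and for x ∈ ℝ let u(x) = B(1, x)ᵀ where B is a positive definite symmetric 2×2 matrix. Then for a < b and w > 0, P( for all x ∈ (a,b), |u(x)·z|/‖u(x)‖ < w ) = P( for all u ∈ E(φ), |u·z|/‖u‖ < w ), where φ ∈ (0, π) is the angle between u(a) and u(b) and E(φ) is the open cone of half-angle φ/2 about the positive z₂-axis. -/

import Mathlib

open MeasureTheory ProbabilityTheory Set Real

/-- Dot product on ℝ². -/
def dot2 (u z : ℝ × ℝ) : ℝ := u.1 * z.1 + u.2 * z.2

/-- Euclidean norm on ℝ². -/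
noncomputable def nrm2 (u : ℝ × ℝ) : ℝ := Real.sqrt (u.1 ^ 2 + u.2 ^ 2)

/-- The open cone of half-angle `φ/2` about the positive `z₂`-axis. -/
noncomputable def coneE (φ : ℝ) : Set (ℝ × ℝ) :=
  {u : ℝ × ℝ | u ≠ 0 ∧ u.2 > nrm2 u * Real.cos (φ / 2)}

/-- The vector `u(x) = B (1, x)ᵀ`, as an element of `ℝ × ℝ`. -/
def uvec (B : Matrix (Fin 2) (Fin 2) ℝ) (x : ℝ) : ℝ × ℝ :=
  (B 0 0 + B 0 1 * x, B 1 0 + B 1 1 * x)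

/-!
The band condition `|u·z| / ‖u‖ < w` is unchanged when `u` is replaced by `l • u` with
`l > 0`, so the event only sees the cone of positive multiples of the `u(x)`. As `u` is affine,
that cone is the open cone spanned by `u(a)` and `u(b)`, which a rotation carries onto `E(φ)`.
Moving the rotation from `u` to `z`, the two events differ by a rotation of `z`, and the
standard Gaussian measure on `ℝ²` is rotation invariant.
-/

open scoped Pointwise

section PosSpan

variable {E F : Type*} [AddCommGroup E] [Module ℝ E] [AddCommGroup F] [Module ℝ F]

def posSpan (p q : E) : Set E := {v | ∃ s t : ℝ, 0 < s ∧ 0 < t ∧ s • p + t • q = v}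

lemma posSpan_comm (p q : E) : posSpan p q = posSpan q p := by
  ext v
  constructor <;> rintro ⟨s, t, hs, ht, rfl⟩ <;> exact ⟨t, s, ht, hs, add_comm _ _⟩

lemma posSpan_smul_smul {l m : ℝ} (hl : 0 < l) (hm : 0 < m) (p q : E) :
    posSpan (l • p) (m • q) = posSpan p q := by
  ext v
  constructor
  · rintro ⟨s, t, hs, ht, rfl⟩
    exact ⟨s * l, t * m, mul_pos hs hl, mul_pos ht hm, by simp only [smul_smul]⟩
  · rintro ⟨s, t, hs, ht, rfl⟩
    refine ⟨s / l, t / m, div_pos hs hl, div_pos ht hm, ?_⟩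
    simp only [smul_smul, div_mul_cancel₀ _ hl.ne', div_mul_cancel₀ _ hm.ne']

lemma image_posSpan {G : Type*} [FunLike G E F] [LinearMapClass G ℝ E F] (f : G) (p q : E) :
    f '' posSpan p q = posSpan (f p) (f q) := by
  ext v
  simp [posSpan]

lemma Ioi_smul_openSegment (p q : E) : Ioi (0 : ℝ) • openSegment ℝ p q = posSpan p q := by
  ext v
  simp only [Set.mem_smul, openSegment, posSpan, mem_Ioi, mem_ofPred_eq]
  constructor
  · rintro ⟨l, hl, _, ⟨s, t, hs, ht, -, rfl⟩, rfl⟩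
    exact ⟨l * s, l * t, mul_pos hl hs, mul_pos hl ht, by simp only [smul_add, smul_smul]⟩
  · rintro ⟨s, t, hs, ht, rfl⟩
    have hst : 0 < s + t := add_pos hs ht
    refine ⟨s + t, hst, _, ⟨s / (s + t), t / (s + t), div_pos hs hst, div_pos ht hst,
      by field_simp, rfl⟩, ?_⟩
    simp only [smul_add, smul_smul, mul_div_cancel₀ _ hst.ne']

end PosSpan

section Rotation

variable {E : Type*} [NormedAddCommGroup E] [NormedSpace ℝ E]

lemma rotation_neg_rotation_apply (θ : ℝ) (x : E × E) :
    ContinuousLinearMap.rotation (-θ) (ContinuousLinearMap.rotation θ x) = x := by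
  have h := sin_sq_add_cos_sq θ
  ext <;> simp only [ContinuousLinearMap.rotation_apply, cos_neg, sin_neg] <;>
    match_scalars <;> grind

noncomputable def rotationHomeomorph (θ : ℝ) : (E × E) ≃ₜ (E × E) where
  toFun := ContinuousLinearMap.rotation θ
  invFun := ContinuousLinearMap.rotation (-θ)
  left_inv := rotation_neg_rotation_apply θ
  right_inv x := by simpa using rotation_neg_rotation_apply (-θ) x
  continuous_toFun := (ContinuousLinearMap.rotation θ).continuous
  continuous_invFun := (ContinuousLinearMap.rotation (-θ)).continuous

@[simp]
lemma coe_rotationHomeomorph (θ : ℝ) :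
    ⇑(rotationHomeomorph (E := E) θ) = ContinuousLinearMap.rotation θ := rfl

variable [SecondCountableTopology E] [CompleteSpace E] [MeasurableSpace E] [BorelSpace E]

lemma ProbabilityTheory.IsGaussian.prod_preimage_rotation {μ : Measure E} [IsGaussian μ]
    (hμ : μ[id] = 0) (θ : ℝ) (A : Set (E × E)) :
    (μ.prod μ) (ContinuousLinearMap.rotation θ ⁻¹' A) = (μ.prod μ) A := by
  have h := (rotationHomeomorph (E := E) θ).measurableEmbedding.map_apply (μ.prod μ) A
  rw [coe_rotationHomeomorph, IsGaussian.map_rotation_eq_self hμ] at h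
  exact h.symm

end Rotation

noncomputable def dirVec (t : ℝ) : ℝ × ℝ := (cos t, sin t)

lemma nrm2_eq_norm (u : ℝ × ℝ) : nrm2 u = ‖(⟨u.1, u.2⟩ : ℂ)‖ := by
  rw [Complex.norm_eq_sqrt_sq_add_sq]; rfl

lemma nrm2_pos {u : ℝ × ℝ} (hu : u ≠ 0) : 0 < nrm2 u := by
  rw [nrm2_eq_norm, norm_pos_iff]
  intro h
  exact hu (Prod.ext (congrArg Complex.re h) (congrArg Complex.im h))

lemma exists_eq_smul_dirVec (u : ℝ × ℝ) : ∃ α, u = nrm2 u • dirVec α :=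
  ⟨Complex.arg ⟨u.1, u.2⟩, by
    rw [nrm2_eq_norm]
    ext <;> simp [dirVec, Complex.norm_mul_cos_arg, Complex.norm_mul_sin_arg]⟩

lemma dot2_smul_dirVec (r s α β : ℝ) :
    dot2 (r • dirVec α) (s • dirVec β) = r * s * cos (β - α) := by
  simp only [dot2, dirVec, Prod.smul_mk, smul_eq_mul, cos_sub]; ring

lemma dirVec_add_eq_of_cos_sin {α δ φ : ℝ} (hc : cos δ = cos φ) (hs : sin δ = sin φ) :
    dirVec (α + δ) = dirVec (α + φ) := by
  simp only [dirVec, cos_add, sin_add, hc, hs]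

lemma exists_posSpan_dirVec_eq {α β φ : ℝ} (h : cos (β - α) = cos φ) :
    ∃ γ, posSpan (dirVec α) (dirVec β) = posSpan (dirVec γ) (dirVec (γ + φ)) := by
  have hsin : sin (β - α) ^ 2 = sin φ ^ 2 := by rw [sin_sq, sin_sq, h]
  -- `β - α ≡ ±φ (mod 2π)`; in the case `-φ` the generators are swapped.
  rcases sq_eq_sq_iff_eq_or_eq_neg.1 hsin with hs | hs
  · refine ⟨α, ?_⟩
    rw [← dirVec_add_eq_of_cos_sin h hs, add_sub_cancel]
  · refine ⟨β, ?_⟩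
    rw [posSpan_comm, ← dirVec_add_eq_of_cos_sin (δ := α - β) (by rw [← neg_sub, cos_neg, h])
      (by rw [← neg_sub, sin_neg, hs, neg_neg]), add_sub_cancel]

lemma rotation_dirVec (θ t : ℝ) :
    ContinuousLinearMap.rotation θ (dirVec t) = dirVec (t - θ) := by
  simp only [ContinuousLinearMap.rotation_apply, dirVec, smul_eq_mul, cos_sub, sin_sub]
  ext <;> simp only <;> ring

lemma dot2_rotation (θ : ℝ) (u z : ℝ × ℝ) :
    dot2 (ContinuousLinearMap.rotation θ u) z = dot2 u (ContinuousLinearMap.rotation (-θ) z) := by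
  simp only [dot2, ContinuousLinearMap.rotation_apply, cos_neg, sin_neg, smul_eq_mul]; ring

lemma nrm2_rotation (θ : ℝ) (u : ℝ × ℝ) :
    nrm2 (ContinuousLinearMap.rotation θ u) = nrm2 u := by
  simp only [nrm2, ContinuousLinearMap.rotation_apply, smul_eq_mul]
  congr 1
  linear_combination (u.1 ^ 2 + u.2 ^ 2) * sin_sq_add_cos_sq θ

def bandEvent (w : ℝ) (S : Set (ℝ × ℝ)) : Set (ℝ × ℝ) :=
  {z | ∀ u ∈ S, |dot2 u z| / nrm2 u < w}

lemma abs_dot2_div_nrm2_smul {l : ℝ} (hl : 0 < l) (u z : ℝ × ℝ) :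
    |dot2 (l • u) z| / nrm2 (l • u) = |dot2 u z| / nrm2 u := by
  have hdot : dot2 (l • u) z = l * dot2 u z := by
    simp only [dot2, Prod.smul_fst, Prod.smul_snd, smul_eq_mul]; ring
  have hnrm : nrm2 (l • u) = l * nrm2 u := by
    simp only [nrm2, Prod.smul_fst, Prod.smul_snd, smul_eq_mul]
    rw [show (l * u.1) ^ 2 + (l * u.2) ^ 2 = l ^ 2 * (u.1 ^ 2 + u.2 ^ 2) by ring,
      Real.sqrt_mul (sq_nonneg l), Real.sqrt_sq hl.le]
  rw [hdot, hnrm, abs_mul, abs_of_pos hl, mul_div_mul_left _ _ hl.ne']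

lemma bandEvent_Ioi_smul (w : ℝ) (S : Set (ℝ × ℝ)) :
    bandEvent w (Ioi (0 : ℝ) • S) = bandEvent w S := by
  ext z
  constructor
  · intro h u hu
    simpa using h ((1 : ℝ) • u) (Set.smul_mem_smul (mem_Ioi.2 one_pos) hu)
  · rintro h _ ⟨l, hl, u, hu, rfl⟩
    exact (abs_dot2_div_nrm2_smul hl u z).trans_lt (h u hu)

lemma bandEvent_image_rotation (w θ : ℝ) (S : Set (ℝ × ℝ)) :
    bandEvent w (ContinuousLinearMap.rotation θ '' S) =
      ContinuousLinearMap.rotation (-θ) ⁻¹' bandEvent w S := by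
  ext z
  simp only [bandEvent, Set.forall_mem_image, dot2_rotation, nrm2_rotation, mem_preimage,
    mem_ofPred_eq]

lemma uvec_ne_zero {B : Matrix (Fin 2) (Fin 2) ℝ} (hB : B.det ≠ 0) (x : ℝ) :
    uvec B x ≠ 0 := by
  intro h0
  have h1 : B 0 0 + B 0 1 * x = 0 := congrArg Prod.fst h0
  have h2 : B 1 0 + B 1 1 * x = 0 := congrArg Prod.snd h0
  apply hB
  rw [Matrix.det_fin_two]
  linear_combination B 1 1 * h1 - B 0 1 * h2

lemma uvec_eq_lineMap (B : Matrix (Fin 2) (Fin 2) ℝ) :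
    uvec B = AffineMap.lineMap (uvec B 0) (uvec B 1) := by
  ext x <;>
    simp only [uvec, AffineMap.lineMap_apply_module, Prod.fst_add, Prod.snd_add, Prod.smul_mk,
      smul_eq_mul] <;> ring

lemma Ioi_smul_image_uvec (B : Matrix (Fin 2) (Fin 2) ℝ) {a b : ℝ} (hab : a < b) :
    Ioi (0 : ℝ) • (uvec B '' Ioo a b) = posSpan (uvec B a) (uvec B b) := by
  rw [← openSegment_eq_Ioo hab, uvec_eq_lineMap, image_openSegment, Ioi_smul_openSegment]

lemma setOf_nrm2_mul_lt_snd_eq {σ κ : ℝ} (hσ : 0 < σ) (hκ : 0 < κ)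
    (hσκ : σ ^ 2 + κ ^ 2 = 1) :
    {v : ℝ × ℝ | v ≠ 0 ∧ v.2 > nrm2 v * κ} = {v | κ * |v.1| < σ * v.2} := by
  ext v
  have hn : nrm2 v ^ 2 = v.1 ^ 2 + v.2 ^ 2 := Real.sq_sqrt (by positivity)
  have hn0 : 0 ≤ nrm2 v := Real.sqrt_nonneg _
  have key : (σ * v.2) ^ 2 - (κ * |v.1|) ^ 2 = v.2 ^ 2 - (nrm2 v * κ) ^ 2 := by
    rw [mul_pow, mul_pow, mul_pow, sq_abs, hn]; linear_combination v.2 ^ 2 * hσκ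
  simp only [mem_ofPred_eq]
  constructor
  · rintro ⟨-, hlt⟩
    have hv2 : 0 < v.2 := lt_of_le_of_lt (mul_nonneg hn0 hκ.le) hlt
    refine (pow_lt_pow_iff_left₀ (by positivity) (by positivity) two_ne_zero).1 ?_
    nlinarith [(pow_lt_pow_iff_left₀ (by positivity) hv2.le two_ne_zero).2 hlt]
  · intro hlt
    have hv2 : 0 < v.2 :=
      pos_of_mul_pos_right ((mul_nonneg hκ.le (abs_nonneg _)).trans_lt hlt) hσ.le
    refine ⟨fun h => hv2.ne' (by rw [h]; rfl), ?_⟩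
    refine (pow_lt_pow_iff_left₀ (by positivity) hv2.le two_ne_zero).1 ?_
    nlinarith [(pow_lt_pow_iff_left₀ (by positivity) (by positivity) two_ne_zero).2 hlt]

lemma posSpan_eq_setOf {σ κ : ℝ} (hσ : 0 < σ) (hκ : 0 < κ) :
    posSpan ((σ, κ) : ℝ × ℝ) (-σ, κ) = {v | κ * |v.1| < σ * v.2} := by
  ext v
  constructor
  · rintro ⟨s, t, hs, ht, rfl⟩
    simp only [mem_ofPred_eq, Prod.fst_add, Prod.snd_add, Prod.smul_mk, smul_eq_mul]
    rw [show s * σ + t * -σ = (s - t) * σ by ring, abs_mul, abs_of_pos hσ]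
    have hst : |s - t| < s + t := abs_sub_lt_iff.2 ⟨by linarith, by linarith⟩
    nlinarith [mul_lt_mul_of_pos_left hst (mul_pos hσ hκ)]
  · intro (hv : κ * |v.1| < σ * v.2)
    obtain ⟨h1, h2⟩ : -(v.2 / κ) < v.1 / σ ∧ v.1 / σ < v.2 / κ := by
      rw [← abs_lt, abs_div, abs_of_pos hσ, div_lt_div_iff₀ hσ hκ]; linarith
    refine ⟨(v.1 / σ + v.2 / κ) / 2, (v.2 / κ - v.1 / σ) / 2, by linarith, by linarith, ?_⟩
    ext <;> simp only [Prod.fst_add, Prod.snd_add, Prod.smul_mk, smul_eq_mul] <;> field_simp <;>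
      ring

lemma coneE_eq_posSpan {φ : ℝ} (hφ : φ ∈ Ioo 0 π) :
    coneE φ =
      posSpan ((sin (φ / 2), cos (φ / 2)) : ℝ × ℝ) (-sin (φ / 2), cos (φ / 2)) := by
  obtain ⟨hφ0, hφπ⟩ := hφ
  have hσ : 0 < sin (φ / 2) := sin_pos_of_pos_of_lt_pi (by linarith) (by linarith)
  have hκ : 0 < cos (φ / 2) := cos_pos_of_mem_Ioo ⟨by linarith [pi_pos], by linarith⟩
  rw [posSpan_eq_setOf hσ hκ, ← setOf_nrm2_mul_lt_snd_eq hσ hκ (sin_sq_add_cos_sq _)]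
  rfl

lemma image_rotation_coneE {φ : ℝ} (hφ : φ ∈ Ioo 0 π) (γ : ℝ) :
    ContinuousLinearMap.rotation (π / 2 - φ / 2 - γ) '' coneE φ =
      posSpan (dirVec γ) (dirVec (γ + φ)) := by
  have h1 : ((sin (φ / 2), cos (φ / 2)) : ℝ × ℝ) = dirVec (π / 2 - φ / 2) := by
    simp [dirVec, cos_pi_div_two_sub, sin_pi_div_two_sub]
  have h2 : ((-sin (φ / 2), cos (φ / 2)) : ℝ × ℝ) = dirVec (φ / 2 + π / 2) := by
    simp [dirVec, cos_add_pi_div_two, sin_add_pi_div_two]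
  rw [coneE_eq_posSpan hφ, image_posSpan, h1, h2, rotation_dirVec, rotation_dirVec]
  congr 2 <;> ring

theorem restricted_band_probability_eq_cone_probability_general
    (B : Matrix (Fin 2) (Fin 2) ℝ) (hB : B.PosDef)
    (a b w : ℝ) (hab : a < b)
    (φ : ℝ)
    (hφdef : φ = Real.arccos (dot2 (uvec B a) (uvec B b) / (nrm2 (uvec B a) * nrm2 (uvec B b))))
    (hφ : φ ∈ Set.Ioo 0 π) :
    ((gaussianReal 0 1).prod (gaussianReal 0 1))
        {z : ℝ × ℝ | ∀ x ∈ Set.Ioo a b, |dot2 (uvec B x) z| / nrm2 (uvec B x) < w} =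
      ((gaussianReal 0 1).prod (gaussianReal 0 1))
        {z : ℝ × ℝ | ∀ u ∈ coneE φ, |dot2 u z| / nrm2 u < w} := by
  have hpos : ∀ x, 0 < nrm2 (uvec B x) := fun x => nrm2_pos (uvec_ne_zero hB.det_pos.ne' x)
  obtain ⟨α, ha⟩ := exists_eq_smul_dirVec (uvec B a)
  obtain ⟨β, hb⟩ := exists_eq_smul_dirVec (uvec B b)
  have hcos : cos (β - α) = cos φ := by
    have hdot := dot2_smul_dirVec (nrm2 (uvec B a)) (nrm2 (uvec B b)) α β
    rw [← ha, ← hb] at hdot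
    rw [hφdef, hdot, mul_div_cancel_left₀ _ (mul_pos (hpos a) (hpos b)).ne',
      cos_arccos (neg_one_le_cos _) (cos_le_one _)]
  obtain ⟨γ, hγ⟩ := exists_posSpan_dirVec_eq hcos
  have hcone : Ioi (0 : ℝ) • (uvec B '' Ioo a b) =
      ContinuousLinearMap.rotation (π / 2 - φ / 2 - γ) '' coneE φ := by
    rw [Ioi_smul_image_uvec B hab, ha, hb, posSpan_smul_smul (hpos a) (hpos b), hγ,
      image_rotation_coneE hφ]
  have hband : {z : ℝ × ℝ | ∀ x ∈ Ioo a b, |dot2 (uvec B x) z| / nrm2 (uvec B x) < w} =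
      bandEvent w (uvec B '' Ioo a b) := by
    simp only [bandEvent, Set.forall_mem_image]
  rw [hband, ← bandEvent_Ioi_smul, hcone, bandEvent_image_rotation,
    IsGaussian.prod_preimage_rotation integral_id_gaussianReal]
  rfl

/-- Let `z` be a standard bivariate normal vector and for `x ∈ ℝ` let `u(x) = B(1, x)ᵀ` where
`B` is a positive definite symmetric 2×2 matrix. Then for `a < b` and `w > 0`,
`P( ∀ x ∈ (a,b), |u(x)·z|/‖u(x)‖ < w ) = P( ∀ u ∈ E(φ), |u·z|/‖u‖ < w )`, where
`φ = arccos( u(a)·u(b) / (‖u(a)‖‖u(b)‖) ) ∈ (0, π)` is the angle between `u(a)` and `u(b)`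
and `E(φ)` is the open cone of half-angle `φ/2` about the positive `z₂`-axis. -/
theorem restricted_band_probability_eq_cone_probability
    (B : Matrix (Fin 2) (Fin 2) ℝ) (hB : B.PosDef) (hBsymm : B.transpose = B)
    (a b w : ℝ) (hab : a < b) (hw : 0 < w)
    (φ : ℝ)
    (hφdef : φ = Real.arccos (dot2 (uvec B a) (uvec B b) / (nrm2 (uvec B a) * nrm2 (uvec B b))))
    (hφ : φ ∈ Set.Ioo 0 π) :
    ((gaussianReal 0 1).prod (gaussianReal 0 1))
        {z : ℝ × ℝ | ∀ x ∈ Set.Ioo a b, |dot2 (uvec B x) z| / nrm2 (uvec B x) < w} =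
      ((gaussianReal 0 1).prod (gaussianReal 0 1))
        {z : ℝ × ℝ | ∀ u ∈ coneE φ, |dot2 u z| / nrm2 u < w} :=
  restricted_band_probability_eq_cone_probability_general B hB a b w hab φ hφdef hφ
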